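/- Let P be a finite planar point set in general position with distinct x-coordinates and let D be the set of all crossing-free segment sets C on P satisfying: C is cycle-free and C has no hidden component. Then D is serializable: D is non-empty, every non-empty C ∈ D contains a right-most extreme element rex(C), and C \ {rex(C)} ∈ D. -/

import Mathlib

open Finset

/-- A segment is a pair of points in the plane (left endpoint, right endpoint). -/
abbrev Seg := (ℝ × ℝ) × (ℝ × ℝ)

/-- The lower shadow of a segment `s`: points whose upward vertical ray meets the
relative interior of `s`. -/
def lowShadow (s : Seg) : Set (ℝ × ℝ) :=
  {p | ∃ y : ℝ, p.2 < y ∧ (p.1, y) ∈ openSegment ℝ s.1 s.2}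

/-- The upper shadow of a segment `s`: points whose downward vertical ray meets the
relative interior of `s`. -/
def uppShadow (s : Seg) : Set (ℝ × ℝ) :=
  {p | ∃ y : ℝ, y < p.2 ∧ (p.1, y) ∈ openSegment ℝ s.1 s.2}

/-- The endpoints of a segment. -/
def segPts (s : Seg) : Set (ℝ × ℝ) := {s.1, s.2}

/-- The dependency relation: `s₂` depends on `s₁` (written `s₁ ⊑ s₂`) whenever
`pts(s₁) ∩ low(s₂) ≠ ∅` or `upp(s₁) ∩ pts(s₂) ≠ ∅`. -/
def SegDep (s₁ s₂ : Seg) : Prop :=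
  (∃ p ∈ segPts s₁, p ∈ lowShadow s₂) ∨ (∃ p ∈ uppShadow s₁, p ∈ segPts s₂)

/-- A segment `s` is extreme in `C` if no other segment of `C` depends on it. -/
def SegExtreme (C : Finset Seg) (s : Seg) : Prop :=
  s ∈ C ∧ ∀ s' ∈ C, s' ≠ s → ¬ SegDep s s'

/-- `s` is the right-most extreme element of `C`. -/
def IsRex (C : Finset Seg) (s : Seg) : Prop :=
  SegExtreme C s ∧ ∀ s', SegExtreme C s' → s' ≠ s → s'.2.1 ≤ s.1.1

/-- One extension step `C →ₛ C'`: `C = C' \ {s}` and `s = rex(C')`. -/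
def StepRel (C : Finset Seg) (s : Seg) (C' : Finset Seg) : Prop :=
  C = C'.erase s ∧ s ∈ C' ∧ IsRex C' s

/-- `C` is a prefix of `C*`: `C*` is obtained from `C` by repeatedly adding a segment
that is the right-most extreme element of the extended set. -/
def IsSegPrefix (C C' : Finset Seg) : Prop :=
  Relation.ReflTransGen (fun A B => ∃ s, StepRel A s B) C C'

/-- `C` is crossing-free: no two distinct segments share an interior point. -/
def CrossingFree (C : Finset Seg) : Prop :=
  ∀ s ∈ C, ∀ t ∈ C, s ≠ t →
    Disjoint (openSegment ℝ s.1 s.2) (openSegment ℝ t.1 t.2)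

/-- Segments of `C` have endpoints in `P`, listed from left to right. -/
def SegsOn (P : Finset (ℝ × ℝ)) (C : Finset Seg) : Prop :=
  ∀ s ∈ C, s.1 ∈ P ∧ s.2 ∈ P ∧ s.1.1 < s.2.1

/-- The graph on the plane induced by the segment set `C`. -/
def segGraph (C : Finset Seg) : SimpleGraph (ℝ × ℝ) where
  Adj a b := a ≠ b ∧ ((a, b) ∈ C ∨ (b, a) ∈ C)
  symm := ⟨fun a b h => ⟨h.1.symm, h.2.symm⟩⟩
  loopless := ⟨fun a h => h.1 rfl⟩

/-- `P` is in general position: no three distinct points are collinear. -/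
def GenPos (P : Finset (ℝ × ℝ)) : Prop :=
  ∀ p ∈ P, ∀ q ∈ P, ∀ r ∈ P, p ≠ q → q ≠ r → p ≠ r →
    ¬ Collinear ℝ ({p, q, r} : Set (ℝ × ℝ))

/-- No two points of `P` share an `x`-coordinate. -/
def DistinctX (P : Finset (ℝ × ℝ)) : Prop :=
  ∀ p ∈ P, ∀ q ∈ P, p ≠ q → p.1 ≠ q.1

/-- `C` has a hidden component: some connected component of `C` lies entirely below
segments of `C`. -/
def HasHiddenComponent (P : Finset (ℝ × ℝ)) (C : Finset Seg) : Prop :=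
  ∃ p ∈ P, ∀ q, (segGraph C).Reachable p q → ∃ s ∈ C, q ∈ lowShadow s

/-- The degree of a point `p` in the segment set `C`. -/
noncomputable def segDeg (C : Finset Seg) (p : ℝ × ℝ) : ℕ :=
  (C.filter (fun s => s.1 = p ∨ s.2 = p)).card

/-- `C` is a crossing-free spanning tree on `P`. -/
def IsCFSpanningTree (P : Finset (ℝ × ℝ)) (C : Finset Seg) : Prop :=
  SegsOn P C ∧ CrossingFree C ∧ (segGraph C).IsAcyclic ∧
  ∀ p ∈ P, ∀ q ∈ P, (segGraph C).Reachable p q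

/-- `C` is a crossing-free spanning cycle on `P`. -/
def IsCFSpanningCycle (P : Finset (ℝ × ℝ)) (C : Finset Seg) : Prop :=
  SegsOn P C ∧ CrossingFree C ∧ (∀ p ∈ P, segDeg C p = 2) ∧
  ∀ p ∈ P, ∀ q ∈ P, (segGraph C).Reachable p q

/-!
Over their common range of abscissae two non-crossing segments keep their vertical order
(intermediate value theorem), and for points in general position with distinct abscissae
`s ⊑ t` holds exactly when `s` runs below `t` there. This "below" relation has a maximal element
on every non-empty crossing-free set, so extreme elements exist; they have pairwise disjoint
ranges of abscissae, hence the one with right-most left endpoint is `rex(C)`. Removing an extreme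
segment `s` cannot create a hidden component: a component of `C \ {s}` that is not hidden in `C`
reaches an endpoint of `s`, and if that endpoint lay in the lower shadow of some other `t`, then
`s ⊑ t`.
-/

def xRange (s : Seg) : Set ℝ := Set.Ioo s.1.1 s.2.1

noncomputable def segHeight (s : Seg) (x : ℝ) : ℝ :=
  s.1.2 + (x - s.1.1) * (s.2.2 - s.1.2) / (s.2.1 - s.1.1)

section Geometry

variable {s t : Seg} {x y : ℝ}

lemma segHeight_fst (s : Seg) : segHeight s s.1.1 = s.1.2 := by simp [segHeight]

lemma segHeight_snd (hs : s.1.1 < s.2.1) : segHeight s s.2.1 = s.2.2 := by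
  have : s.2.1 - s.1.1 ≠ 0 := by linarith
  simp only [segHeight]; field_simp; ring

lemma continuous_segHeight (s : Seg) : Continuous (segHeight s) := by
  unfold segHeight; fun_prop

lemma fst_mem_closure_xRange (hs : s.1.1 < s.2.1) : s.1.1 ∈ closure (xRange s) := by
  rw [xRange, closure_Ioo hs.ne]; exact Set.left_mem_Icc.2 hs.le

lemma snd_mem_closure_xRange (hs : s.1.1 < s.2.1) : s.2.1 ∈ closure (xRange s) := by
  rw [xRange, closure_Ioo hs.ne]; exact Set.right_mem_Icc.2 hs.le

lemma mem_closure_xRange_inter (hx : x ∈ xRange s) (hx' : x ∈ closure (xRange t)) :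
    x ∈ closure (xRange s ∩ xRange t) :=
  isOpen_Ioo.inter_closure ⟨hx, hx'⟩

lemma mk_mem_openSegment_iff (hs : s.1.1 < s.2.1) :
    (x, y) ∈ openSegment ℝ s.1 s.2 ↔ x ∈ xRange s ∧ y = segHeight s x := by
  have hd : s.2.1 - s.1.1 ≠ 0 := by linarith
  rw [openSegment_eq_image', xRange, segHeight]
  constructor
  · rintro ⟨θ, ⟨hθ0, hθ1⟩, he⟩
    simp only [Prod.ext_iff, Prod.fst_add, Prod.snd_add, Prod.smul_fst, Prod.smul_snd,
      Prod.fst_sub, Prod.snd_sub, smul_eq_mul] at he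
    obtain ⟨rfl, rfl⟩ := he
    refine ⟨⟨by nlinarith, by nlinarith⟩, ?_⟩
    field_simp; ring
  · rintro ⟨⟨h1, h2⟩, rfl⟩
    refine ⟨(x - s.1.1) / (s.2.1 - s.1.1), ⟨div_pos (by linarith) (by linarith), ?_⟩, ?_⟩
    · rw [div_lt_one (by linarith)]; linarith
    · simp only [Prod.ext_iff, Prod.fst_add, Prod.snd_add, Prod.smul_fst, Prod.smul_snd,
        Prod.fst_sub, Prod.snd_sub, smul_eq_mul]
      constructor
      · field_simp; ring
      · field_simp

lemma GenPos.notMem_openSegment {P : Finset (ℝ × ℝ)} (hgen : GenPos P) {p : ℝ × ℝ}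
    (hp : p ∈ P) (h1 : s.1 ∈ P) (h2 : s.2 ∈ P) (hs : s.1 ≠ s.2) :
    p ∉ openSegment ℝ s.1 s.2 := by
  intro hmem
  have hp1 : p ≠ s.1 := by rintro rfl; exact hs (left_mem_openSegment_iff.1 hmem)
  have hp2 : p ≠ s.2 := by rintro rfl; exact hs (right_mem_openSegment_iff.1 hmem)
  exact hgen p hp s.1 h1 s.2 h2 hp1 hs hp2 <| collinear_insert_of_mem_affineSpan_pair <|
    (mem_segment_iff_wbtw.1 (openSegment_subset_segment _ _ _ hmem)).mem_affineSpan

end Geometry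

def SegBelow (s t : Seg) : Prop :=
  ∃ x ∈ xRange s ∩ xRange t, segHeight s x < segHeight t x

section Below

variable {s t : Seg} {x : ℝ}

lemma SegBelow.ne (h : SegBelow s t) : s ≠ t := by
  rintro rfl
  obtain ⟨x, -, hx⟩ := h
  exact lt_irrefl _ hx

lemma segBelow_of_mem_closure (hx : x ∈ closure (xRange s ∩ xRange t))
    (h : segHeight s x < segHeight t x) : SegBelow s t := by
  obtain ⟨y, hy, hyst⟩ := mem_closure_iff_nhds.1 hx _
    ((isOpen_lt (continuous_segHeight s) (continuous_segHeight t)).mem_nhds h)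
  exact ⟨y, hyst, hy⟩

lemma segHeight_ne_of_disjoint (hs : s.1.1 < s.2.1) (ht : t.1.1 < t.2.1)
    (hst : Disjoint (openSegment ℝ s.1 s.2) (openSegment ℝ t.1 t.2))
    (hx : x ∈ xRange s ∩ xRange t) : segHeight s x ≠ segHeight t x := fun he =>
  Set.disjoint_left.1 hst ((mk_mem_openSegment_iff hs).2 ⟨hx.1, rfl⟩)
    ((mk_mem_openSegment_iff ht).2 ⟨hx.2, he⟩)

lemma SegBelow.segHeight_lt (h : SegBelow s t) (hs : s.1.1 < s.2.1) (ht : t.1.1 < t.2.1)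
    (hst : Disjoint (openSegment ℝ s.1 s.2) (openSegment ℝ t.1 t.2))
    (hx : x ∈ xRange s ∩ xRange t) : segHeight s x < segHeight t x := by
  obtain ⟨x₀, hx₀, hlt⟩ := h
  by_contra! hle
  have hconn : IsPreconnected (xRange s ∩ xRange t) := by
    rw [xRange, xRange, Set.Ioo_inter_Ioo]; exact isPreconnected_Ioo
  obtain ⟨c, hc, hc0⟩ := hconn.intermediate_value hx hx₀
    ((continuous_segHeight t).sub (continuous_segHeight s)).continuousOn
    (show (0 : ℝ) ∈ Set.Icc _ _ from ⟨by simpa using hle, by simpa using hlt.le⟩)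
  exact segHeight_ne_of_disjoint hs ht hst hc (sub_eq_zero.1 hc0).symm

lemma SegBelow.segHeight_le (h : SegBelow s t) (hs : s.1.1 < s.2.1) (ht : t.1.1 < t.2.1)
    (hst : Disjoint (openSegment ℝ s.1 s.2) (openSegment ℝ t.1 t.2))
    (hx : x ∈ closure (xRange s ∩ xRange t)) : segHeight s x ≤ segHeight t x :=
  closure_lt_subset_le (continuous_segHeight s) (continuous_segHeight t)
    (closure_mono (fun _ hy => h.segHeight_lt hs ht hst hy) hx)

lemma segBelow_of_segDep (hs : s.1.1 < s.2.1) (ht : t.1.1 < t.2.1) (h : SegDep s t) :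
    SegBelow s t := by
  rcases h with ⟨p, hp, y, hy, hmem⟩ | ⟨q, ⟨y, hy, hmem⟩, hq⟩
  · obtain ⟨hx, rfl⟩ := (mk_mem_openSegment_iff ht).1 hmem
    have hcl : p.1 ∈ closure (xRange s) → p.1 ∈ closure (xRange s ∩ xRange t) := fun hcl => by
      rw [Set.inter_comm]; exact mem_closure_xRange_inter hx hcl
    rcases hp with rfl | rfl
    · exact segBelow_of_mem_closure (hcl (fst_mem_closure_xRange hs)) (by rwa [segHeight_fst])
    · exact segBelow_of_mem_closure (hcl (snd_mem_closure_xRange hs))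
        (by rwa [segHeight_snd hs])
  · obtain ⟨hx, rfl⟩ := (mk_mem_openSegment_iff hs).1 hmem
    rcases hq with rfl | rfl
    · exact segBelow_of_mem_closure (mem_closure_xRange_inter hx (fst_mem_closure_xRange ht))
        (by rwa [segHeight_fst])
    · exact segBelow_of_mem_closure (mem_closure_xRange_inter hx (snd_mem_closure_xRange ht))
        (by rwa [segHeight_snd ht])

end Below

section Extreme

variable {C : Finset Seg}

lemma CrossingFree.mono {C' : Finset Seg} (hC : CrossingFree C) (h : C' ⊆ C) :
    CrossingFree C' :=
  fun s hs t ht => hC s (h hs) t (h ht)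

/-- Just right of the left endpoint of `b`, all three segments are present. -/
lemma SegBelow.trans_of_fst_le (hcf : CrossingFree C) (hC : ∀ s ∈ C, s.1.1 < s.2.1)
    {a b c : Seg} (ha : a ∈ C) (hb : b ∈ C) (hc : c ∈ C) (hab : SegBelow a b)
    (hbc : SegBelow b c) (ha_le : a.1.1 ≤ b.1.1) (hc_le : c.1.1 ≤ b.1.1) : SegBelow a c := by
  obtain ⟨x₁, ⟨⟨-, hxa⟩, ⟨hbx, -⟩⟩, -⟩ := id hab
  obtain ⟨x₂, ⟨⟨hbx', -⟩, ⟨-, hxc⟩⟩, -⟩ := id hbc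
  obtain ⟨x, hbx, hx⟩ := exists_between
    (lt_min (hbx.trans hxa) (lt_min (hC b hb) (hbx'.trans hxc)))
  simp only [lt_min_iff] at hx
  have hxa : x ∈ xRange a := ⟨ha_le.trans_lt hbx, hx.1⟩
  have hxb : x ∈ xRange b := ⟨hbx, hx.2.1⟩
  have hxc : x ∈ xRange c := ⟨hc_le.trans_lt hbx, hx.2.2⟩
  exact ⟨x, ⟨hxa, hxc⟩,
    (hab.segHeight_lt (hC a ha) (hC b hb) (hcf a ha b hb hab.ne) ⟨hxa, hxb⟩).trans
      (hbc.segHeight_lt (hC b hb) (hC c hc) (hcf b hb c hc hbc.ne) ⟨hxb, hxc⟩)⟩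

/-- Adding a segment `b` with right-most left endpoint: if a maximal `s` of the rest lies below
`b`, then `b` is maximal, since `b` below `t` would give `s` below `t`. -/
lemma exists_forall_not_segBelow (hcf : CrossingFree C) (hC : ∀ s ∈ C, s.1.1 < s.2.1)
    (hne : C.Nonempty) : ∃ s ∈ C, ∀ t ∈ C, ¬ SegBelow s t := by
  classical
  induction C using Finset.induction_on_max_value (fun s : Seg => s.1.1) with
  | empty => exact absurd hne Finset.not_nonempty_empty
  | insert b C _ hmax ih =>
    rcases C.eq_empty_or_nonempty with rfl | hCne
    · refine ⟨b, mem_insert_self _ _, fun t ht hbt => ?_⟩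
      rw [insert_empty, mem_singleton] at ht
      exact hbt.ne ht.symm
    obtain ⟨s, hs, hsmax⟩ := ih (hcf.mono (subset_insert _ _))
      (fun s hs => hC s (mem_insert_of_mem hs)) hCne
    by_cases hsb : SegBelow s b
    · refine ⟨b, mem_insert_self _ _, fun t ht hbt => ?_⟩
      rcases mem_insert.1 ht with rfl | ht
      · exact hbt.ne rfl
      · exact hsmax t ht (hsb.trans_of_fst_le hcf hC (mem_insert_of_mem hs)
          (mem_insert_self _ _) (mem_insert_of_mem ht) hbt (hmax s hs) (hmax t ht))
    · refine ⟨s, mem_insert_of_mem hs, fun t ht => ?_⟩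
      rcases mem_insert.1 ht with rfl | ht
      exacts [hsb, hsmax t ht]

lemma exists_segExtreme (hcf : CrossingFree C) (hC : ∀ s ∈ C, s.1.1 < s.2.1)
    (hne : C.Nonempty) : ∃ s, SegExtreme C s := by
  obtain ⟨s, hs, hmax⟩ := exists_forall_not_segBelow hcf hC hne
  exact ⟨s, hs, fun t ht _ hdep => hmax t ht (segBelow_of_segDep (hC s hs) (hC t ht) hdep)⟩

end Extreme

section OnPoints

variable {P : Finset (ℝ × ℝ)} {C : Finset Seg} {s t : Seg}

lemma SegsOn.fst_lt_snd (hC : SegsOn P C) : ∀ s ∈ C, s.1.1 < s.2.1 :=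
  fun s hs => (hC s hs).2.2

lemma SegsOn.fst_ne_snd (hC : SegsOn P C) (hs : s ∈ C) : s.1 ≠ s.2 :=
  fun h => (hC.fst_lt_snd s hs).ne (congrArg Prod.fst h)

lemma mem_lowShadow_of_le (hgen : GenPos P) (hC : SegsOn P C) (ht : t ∈ C) {p : ℝ × ℝ}
    (hp : p ∈ P) (hx : p.1 ∈ xRange t) (hle : p.2 ≤ segHeight t p.1) : p ∈ lowShadow t := by
  obtain ⟨ht1, ht2, hlt⟩ := hC t ht
  have hmem := (mk_mem_openSegment_iff hlt).2 ⟨hx, rfl⟩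
  refine ⟨_, hle.lt_of_ne fun he => ?_, hmem⟩
  rw [← he] at hmem
  exact hgen.notMem_openSegment hp ht1 ht2 (hC.fst_ne_snd ht) hmem

lemma mem_uppShadow_of_le (hgen : GenPos P) (hC : SegsOn P C) (ht : t ∈ C) {p : ℝ × ℝ}
    (hp : p ∈ P) (hx : p.1 ∈ xRange t) (hle : segHeight t p.1 ≤ p.2) : p ∈ uppShadow t := by
  obtain ⟨ht1, ht2, hlt⟩ := hC t ht
  have hmem := (mk_mem_openSegment_iff hlt).2 ⟨hx, rfl⟩
  refine ⟨_, hle.lt_of_ne fun he => ?_, hmem⟩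
  rw [he] at hmem
  exact hgen.notMem_openSegment hp ht1 ht2 (hC.fst_ne_snd ht) hmem

/-- Where the common range of `s` and `t` begins (or, if they share their left endpoint, ends),
an endpoint of one segment lies over the interior of the other; general position makes the
inequality strict. -/
lemma segDep_of_segBelow (hgen : GenPos P) (hdx : DistinctX P) (hcf : CrossingFree C)
    (hC : SegsOn P C) (hs : s ∈ C) (ht : t ∈ C) (h : SegBelow s t) : SegDep s t := by
  obtain ⟨hs1, hs2, hls⟩ := hC s hs
  obtain ⟨ht1, ht2, hlt⟩ := hC t ht
  have hle : ∀ x ∈ closure (xRange s ∩ xRange t), segHeight s x ≤ segHeight t x :=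
    fun x hx => h.segHeight_le hls hlt (hcf s hs t ht h.ne) hx
  have hcl : ∀ x ∈ xRange t, x ∈ closure (xRange s) → x ∈ closure (xRange s ∩ xRange t) :=
    fun x hx hcl => by rw [Set.inter_comm]; exact mem_closure_xRange_inter hx hcl
  obtain ⟨x₀, ⟨⟨hsx₀, hx₀s⟩, ⟨htx₀, hx₀t⟩⟩, -⟩ := id h
  rcases lt_trichotomy s.1.1 t.1.1 with hl | hl | hl
  · have hx : t.1.1 ∈ xRange s := ⟨hl, htx₀.trans hx₀s⟩
    refine Or.inr ⟨t.1, mem_uppShadow_of_le hgen hC hs ht1 hx ?_, Or.inl rfl⟩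
    simpa only [segHeight_fst] using
      hle _ (mem_closure_xRange_inter hx (fst_mem_closure_xRange hlt))
  · have he1 : s.1 = t.1 := by_contra fun hne => hdx _ hs1 _ ht1 hne hl
    rcases lt_trichotomy s.2.1 t.2.1 with hr | hr | hr
    · have hx : s.2.1 ∈ xRange t := ⟨htx₀.trans hx₀s, hr⟩
      refine Or.inl ⟨s.2, Or.inr rfl, mem_lowShadow_of_le hgen hC ht hs2 hx ?_⟩
      simpa only [segHeight_snd hls] using hle _ (hcl _ hx (snd_mem_closure_xRange hls))
    · have he2 : s.2 = t.2 := by_contra fun hne => hdx _ hs2 _ ht2 hne hr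
      exact absurd (Prod.ext he1 he2) h.ne
    · have hx : t.2.1 ∈ xRange s := ⟨hl ▸ hlt, hr⟩
      refine Or.inr ⟨t.2, mem_uppShadow_of_le hgen hC hs ht2 hx ?_, Or.inr rfl⟩
      simpa only [segHeight_snd hlt] using
        hle _ (mem_closure_xRange_inter hx (snd_mem_closure_xRange hlt))
  · have hx : s.1.1 ∈ xRange t := ⟨hl, hsx₀.trans hx₀t⟩
    refine Or.inl ⟨s.1, Or.inl rfl, mem_lowShadow_of_le hgen hC ht hs1 hx ?_⟩
    simpa only [segHeight_fst] using hle _ (hcl _ hx (fst_mem_closure_xRange hls))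

lemma SegExtreme.eq_of_mem_xRange (hgen : GenPos P) (hdx : DistinctX P) (hcf : CrossingFree C)
    (hC : SegsOn P C) (hs : SegExtreme C s) (ht : SegExtreme C t) {x : ℝ}
    (hx : x ∈ xRange s ∩ xRange t) : s = t := by
  by_contra hst
  rcases (segHeight_ne_of_disjoint (hC.fst_lt_snd s hs.1) (hC.fst_lt_snd t ht.1)
    (hcf s hs.1 t ht.1 hst) hx).lt_or_gt with h | h
  · exact hs.2 t ht.1 (Ne.symm hst) (segDep_of_segBelow hgen hdx hcf hC hs.1 ht.1 ⟨x, hx, h⟩)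
  · exact ht.2 s hs.1 hst (segDep_of_segBelow hgen hdx hcf hC ht.1 hs.1 ⟨x, hx.symm, h⟩)

lemma exists_isRex (hgen : GenPos P) (hdx : DistinctX P) (hcf : CrossingFree C)
    (hC : SegsOn P C) (hne : C.Nonempty) : ∃ s, IsRex C s := by
  classical
  obtain ⟨s₀, hs₀⟩ := exists_segExtreme hcf hC.fst_lt_snd hne
  obtain ⟨s, hs, hmax⟩ := (C.filter (SegExtreme C)).exists_max_image (fun s => s.1.1)
    ⟨s₀, mem_filter.2 ⟨hs₀.1, hs₀⟩⟩
  have hsex := (mem_filter.1 hs).2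
  refine ⟨s, hsex, fun t ht hts => ?_⟩
  by_contra! hst
  have hts_le : t.1.1 ≤ s.1.1 := hmax t (mem_filter.2 ⟨ht.1, ht⟩)
  obtain ⟨x, hsx, hx⟩ := exists_between (lt_min hst (hC.fst_lt_snd s hsex.1))
  rw [lt_min_iff] at hx
  exact hts (ht.eq_of_mem_xRange hgen hdx hcf hC hsex ⟨⟨hts_le.trans_lt hsx, hx.1⟩, ⟨hsx, hx.2⟩⟩)

end OnPoints

section Graph

variable {P : Finset (ℝ × ℝ)} {C : Finset Seg} {s : Seg}

lemma segGraph_mono {C' : Finset Seg} (h : C' ⊆ C) : segGraph C' ≤ segGraph C :=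
  fun _ _ hab => ⟨hab.1, hab.2.imp (@h _) (@h _)⟩

lemma segGraph_empty : segGraph ∅ = ⊥ := by
  ext; simp [segGraph]

lemma reachable_erase_or {p q : ℝ × ℝ} (s : Seg) (h : (segGraph C).Reachable p q) :
    (segGraph (C.erase s)).Reachable p q ∨
      ∃ e ∈ segPts s, (segGraph (C.erase s)).Reachable p e := by
  obtain ⟨w⟩ := h
  induction w with
  | nil => exact Or.inl .rfl
  | @cons u v _ huv _ ih =>
    by_cases hu : u ∈ segPts s
    · exact Or.inr ⟨u, hu, .rfl⟩
    have huv' : (segGraph (C.erase s)).Adj u v := by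
      refine ⟨huv.1, huv.2.imp (fun h => mem_erase.2 ⟨?_, h⟩) (fun h => mem_erase.2 ⟨?_, h⟩)⟩
      · rintro rfl; exact hu (Or.inl rfl)
      · rintro rfl; exact hu (Or.inr rfl)
    exact ih.imp huv'.reachable.trans fun ⟨e, he, hve⟩ => ⟨e, he, huv'.reachable.trans hve⟩

lemma SegExtreme.not_hasHiddenComponent_erase (hs : SegExtreme C s)
    (h : ¬ HasHiddenComponent P C) : ¬ HasHiddenComponent P (C.erase s) := by
  rintro ⟨p, hp, hhid⟩
  refine h ⟨p, hp, fun q hq => ?_⟩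
  rcases reachable_erase_or s hq with hq' | ⟨e, he, hpe⟩
  · obtain ⟨t, ht, hqt⟩ := hhid q hq'
    exact ⟨t, mem_of_mem_erase ht, hqt⟩
  · obtain ⟨t, ht, het⟩ := hhid e hpe
    exact absurd (Or.inl ⟨e, he, het⟩) (hs.2 t (mem_of_mem_erase ht) (ne_of_mem_erase ht))

end Graph

/-- The set `D` of crossing-free, cycle-free segment sets on `P` without hidden
components is serializable: it is non-empty, and every non-empty `C ∈ D` contains a
right-most extreme element `rex(C)` with `C \ {rex(C)} ∈ D`. -/
theorem prestr_serializable (P : Finset (ℝ × ℝ))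
    (hgen : GenPos P) (hx : DistinctX P) :
    letI D : Set (Finset Seg) := {C | SegsOn P C ∧ CrossingFree C ∧
      (segGraph C).IsAcyclic ∧ ¬ HasHiddenComponent P C}
    D.Nonempty ∧
    ∀ C ∈ D, C.Nonempty → ∃ s : Seg, IsRex C s ∧ C.erase s ∈ D := by
  refine ⟨⟨∅, by simp [SegsOn], by simp [CrossingFree], by simp [segGraph_empty], ?_⟩, ?_⟩
  · rintro ⟨p, -, hp⟩
    obtain ⟨s, hs, -⟩ := hp p .rfl
    exact notMem_empty s hs
  · rintro C ⟨hC, hcf, hacyc, hhid⟩ hne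
    obtain ⟨s, hs⟩ := exists_isRex hgen hx hcf hC hne
    have hsub := C.erase_subset s
    exact ⟨s, hs, fun t ht => hC t (hsub ht), hcf.mono hsub, hacyc.anti (segGraph_mono hsub),
      hs.1.not_hasHiddenComponent_erase hhid⟩
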